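/- Let U ⊆ ℝ² be open, F : U → ℝ three times continuously differentiable, m ∈ ℝ, and let γ : I → U be a differentiable curve on an interval I with γ(t) ≠ (0,0) and γ'(t) = (F_y(γ(t)), −F_x(γ(t))) for all t ∈ I. Suppose that at every point (x,y) = γ(t): (x² + y²)·(F_xxx·F_y³ − 3·F_xxy·F_x·F_y² + 3·F_xyy·F_x²·F_y − F_yyy·F_x³) + 6·(1−m)·H(F)·(x·F_y − y·F_x) = 0, where H(F) := F_xx·F_y² − 2·F_xy·F_x·F_y + F_yy·F_x² and all derivatives are evaluated at (x,y). Then the function t ↦ H(F)(γ(t))·(γ₁(t)² + γ₂(t)²)^{3−3m} (real power) is constant on I. -/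

import Mathlib

/-- Partial derivative of `F : ℝ × ℝ → ℝ` in the first variable. -/
noncomputable def pdx (F : ℝ × ℝ → ℝ) : ℝ × ℝ → ℝ :=
  fun p => deriv (fun s => F (s, p.2)) p.1

/-- Partial derivative of `F : ℝ × ℝ → ℝ` in the second variable. -/
noncomputable def pdy (F : ℝ × ℝ → ℝ) : ℝ × ℝ → ℝ :=
  fun p => deriv (fun s => F (p.1, s)) p.2

/-- The affine Hessian-type expression `H(F) = F_xx F_y² − 2F_xy F_x F_y + F_yy F_x²`. -/
noncomputable def HH (F : ℝ × ℝ → ℝ) : ℝ × ℝ → ℝ :=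
  fun p => pdx (pdx F) p * (pdy F p) ^ 2 - 2 * pdy (pdx F) p * pdx F p * pdy F p +
    pdy (pdy F) p * (pdx F p) ^ 2

/-! Along an integral curve of `v = (F_y, -F_x)` the derivative of `H(F)` is `d³F(v, v, v)` and that
of `r = x² + y²` is `2(x F_y - y F_x)`, so the hypothesis says `r H' + (3 - 3m) H r' = 0`. Since
`(H r^a)' = r^(a-1) (r H' + a H r')`, the product `H r^(3-3m)` has zero derivative on the interval
`I` (where `r ≠ 0`), and is therefore constant there by the mean value inequality. -/

open Filter Topology

section PartialDerivatives

variable {g h : ℝ × ℝ → ℝ} {p : ℝ × ℝ} {U : Set (ℝ × ℝ)}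

lemma pdx_eq_fderiv (hg : DifferentiableAt ℝ g p) : pdx g p = fderiv ℝ g p (1, 0) :=
  (hg.hasFDerivAt.comp_hasDerivAt p.1
    ((hasDerivAt_id p.1).prodMk (hasDerivAt_const p.1 p.2))).deriv

lemma pdy_eq_fderiv (hg : DifferentiableAt ℝ g p) : pdy g p = fderiv ℝ g p (0, 1) :=
  (hg.hasFDerivAt.comp_hasDerivAt p.2
    ((hasDerivAt_const p.2 p.1).prodMk (hasDerivAt_id p.2))).deriv

lemma Filter.EventuallyEq.pdx_eq (hgh : g =ᶠ[𝓝 p] h) : pdx g p = pdx h p :=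
  EventuallyEq.deriv_eq <| hgh.comp_tendsto (by fun_prop : ContinuousAt (fun s => (s, p.2)) p.1)

lemma Filter.EventuallyEq.pdy_eq (hgh : g =ᶠ[𝓝 p] h) : pdy g p = pdy h p :=
  EventuallyEq.deriv_eq <| hgh.comp_tendsto (by fun_prop : ContinuousAt (fun s => (p.1, s)) p.2)

lemma ContDiffOn.pdx {n : ℕ∞} (hU : IsOpen U) (hg : ContDiffOn ℝ (n + 1) g U) :
    ContDiffOn ℝ n (pdx g) U :=
  ((hg.fderiv_of_isOpen hU le_rfl).clm_apply contDiffOn_const).congr fun _ hq =>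
    pdx_eq_fderiv ((hg.differentiableOn (by simp)).differentiableAt (hU.mem_nhds hq))

lemma ContDiffOn.pdy {n : ℕ∞} (hU : IsOpen U) (hg : ContDiffOn ℝ (n + 1) g U) :
    ContDiffOn ℝ n (pdy g) U :=
  ((hg.fderiv_of_isOpen hU le_rfl).clm_apply contDiffOn_const).congr fun _ hq =>
    pdy_eq_fderiv ((hg.differentiableOn (by simp)).differentiableAt (hU.mem_nhds hq))

lemma pdx_fderiv_apply (hg : DifferentiableAt ℝ (fderiv ℝ g) p) (w : ℝ × ℝ) :
    pdx (fun q => fderiv ℝ g q w) p = fderiv ℝ (fderiv ℝ g) p (1, 0) w := by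
  have hw : HasFDerivAt (fun q => fderiv ℝ g q w)
      ((ContinuousLinearMap.apply ℝ ℝ w).comp (fderiv ℝ (fderiv ℝ g) p)) p :=
    (ContinuousLinearMap.apply ℝ ℝ w).hasFDerivAt.comp p hg.hasFDerivAt
  rw [pdx_eq_fderiv hw.differentiableAt, hw.fderiv]
  rfl

lemma pdy_fderiv_apply (hg : DifferentiableAt ℝ (fderiv ℝ g) p) (w : ℝ × ℝ) :
    pdy (fun q => fderiv ℝ g q w) p = fderiv ℝ (fderiv ℝ g) p (0, 1) w := by
  have hw : HasFDerivAt (fun q => fderiv ℝ g q w)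
      ((ContinuousLinearMap.apply ℝ ℝ w).comp (fderiv ℝ (fderiv ℝ g) p)) p :=
    (ContinuousLinearMap.apply ℝ ℝ w).hasFDerivAt.comp p hg.hasFDerivAt
  rw [pdy_eq_fderiv hw.differentiableAt, hw.fderiv]
  rfl

lemma pdx_pdy_eq_pdy_pdx (hU : IsOpen U) (hg : ContDiffOn ℝ 2 g U) (hp : p ∈ U) :
    pdx (pdy g) p = pdy (pdx g) p := by
  have hd : ∀ᶠ q in 𝓝 p, DifferentiableAt ℝ g q := by
    filter_upwards [hU.mem_nhds hp] with q hq
    exact (hg.differentiableOn two_ne_zero).differentiableAt (hU.mem_nhds hq)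
  have hd2 : DifferentiableAt ℝ (fderiv ℝ g) p :=
    ((hg.fderiv_of_isOpen hU (m := 1) (by norm_num)).differentiableOn one_ne_zero).differentiableAt
      (hU.mem_nhds hp)
  have hx : pdx g =ᶠ[𝓝 p] fun q => fderiv ℝ g q (1, 0) := hd.mono fun _ => pdx_eq_fderiv
  have hy : pdy g =ᶠ[𝓝 p] fun q => fderiv ℝ g q (0, 1) := hd.mono fun _ => pdy_eq_fderiv
  have hsymm := (hg.contDiffAt (hU.mem_nhds hp)).isSymmSndFDerivAt (by simp)
  calc pdx (pdy g) p = pdx (fun q => fderiv ℝ g q (0, 1)) p := hy.pdx_eq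
    _ = fderiv ℝ (fderiv ℝ g) p (1, 0) (0, 1) := pdx_fderiv_apply hd2 _
    _ = fderiv ℝ (fderiv ℝ g) p (0, 1) (1, 0) := hsymm _ _
    _ = pdy (fun q => fderiv ℝ g q (1, 0)) p := (pdy_fderiv_apply hd2 _).symm
    _ = pdy (pdx g) p := hx.pdy_eq.symm

lemma pdx_pdy_eventuallyEq_pdy_pdx (hU : IsOpen U) (hg : ContDiffOn ℝ 2 g U) (hp : p ∈ U) :
    pdx (pdy g) =ᶠ[𝓝 p] pdy (pdx g) := by
  filter_upwards [hU.mem_nhds hp] with q hq using pdx_pdy_eq_pdy_pdx hU hg hq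

end PartialDerivatives

section AlongCurves

variable {g : ℝ × ℝ → ℝ} {γ : ℝ → ℝ × ℝ} {v : ℝ × ℝ} {t : ℝ} {U : Set (ℝ × ℝ)}

lemma DifferentiableAt.hasDerivAt_comp_curve (hg : DifferentiableAt ℝ g (γ t))
    (hγ : HasDerivAt γ v t) :
    HasDerivAt (fun t => g (γ t)) (v.1 * pdx g (γ t) + v.2 * pdy g (γ t)) t := by
  refine (hg.hasFDerivAt.comp_hasDerivAt t hγ).congr_deriv ?_
  rw [pdx_eq_fderiv hg, pdy_eq_fderiv hg, ← smul_eq_mul, ← smul_eq_mul, ← map_smul, ← map_smul,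
    ← map_add]
  congr 1
  ext <;> simp

lemma hasDerivAt_pdx_comp_curve (hU : IsOpen U) (hg : ContDiffOn ℝ 2 g U) (hγU : γ t ∈ U)
    (hγ : HasDerivAt γ v t) :
    HasDerivAt (fun t => pdx g (γ t))
      (v.1 * pdx (pdx g) (γ t) + v.2 * pdy (pdx g) (γ t)) t :=
  DifferentiableAt.hasDerivAt_comp_curve
    (((hg.pdx (n := 1) hU).differentiableOn one_ne_zero).differentiableAt (hU.mem_nhds hγU)) hγ

lemma hasDerivAt_pdy_comp_curve (hU : IsOpen U) (hg : ContDiffOn ℝ 2 g U) (hγU : γ t ∈ U)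
    (hγ : HasDerivAt γ v t) :
    HasDerivAt (fun t => pdy g (γ t))
      (v.1 * pdy (pdx g) (γ t) + v.2 * pdy (pdy g) (γ t)) t := by
  rw [← pdx_pdy_eq_pdy_pdx hU hg hγU]
  exact DifferentiableAt.hasDerivAt_comp_curve
    (((hg.pdy (n := 1) hU).differentiableOn one_ne_zero).differentiableAt (hU.mem_nhds hγU)) hγ

lemma HasDerivAt.fst_sq_add_snd_sq (hγ : HasDerivAt γ v t) :
    HasDerivAt (fun t => (γ t).1 ^ 2 + (γ t).2 ^ 2) (2 * ((γ t).1 * v.1 + (γ t).2 * v.2)) t := by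
  have h1 : HasDerivAt (fun t => (γ t).1) v.1 t :=
    (ContinuousLinearMap.fst ℝ ℝ ℝ).hasFDerivAt.comp_hasDerivAt t hγ
  have h2 : HasDerivAt (fun t => (γ t).2) v.2 t :=
    (ContinuousLinearMap.snd ℝ ℝ ℝ).hasFDerivAt.comp_hasDerivAt t hγ
  exact ((h1.pow 2).add (h2.pow 2)).congr_deriv (by ring)

-- The second-order terms cancel, leaving `d³F(v, v, v)` for `v = (F_y, -F_x)`.
lemma hasDerivAt_HH_comp_curve {F : ℝ × ℝ → ℝ} (hU : IsOpen U) (hF : ContDiffOn ℝ 3 F U)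
    (hγU : γ t ∈ U) (hγ : HasDerivAt γ (pdy F (γ t), -pdx F (γ t)) t) :
    HasDerivAt (fun t => HH F (γ t))
      (pdx (pdx (pdx F)) (γ t) * (pdy F (γ t)) ^ 3 -
        3 * pdy (pdx (pdx F)) (γ t) * pdx F (γ t) * (pdy F (γ t)) ^ 2 +
        3 * pdy (pdy (pdx F)) (γ t) * (pdx F (γ t)) ^ 2 * pdy F (γ t) -
        pdy (pdy (pdy F)) (γ t) * (pdx F (γ t)) ^ 3) t := by
  have hF3 : ContDiffOn ℝ ((2 : ℕ∞) + 1) F U := hF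
  have hF2 : ContDiffOn ℝ 2 F U := hF.of_le (by norm_num)
  have hFx := hasDerivAt_pdx_comp_curve hU hF2 hγU hγ
  have hFy := hasDerivAt_pdy_comp_curve hU hF2 hγU hγ
  have hFxx := hasDerivAt_pdx_comp_curve hU (hF3.pdx hU) hγU hγ
  have hFxy := hasDerivAt_pdy_comp_curve hU (hF3.pdx hU) hγU hγ
  have hFyy := hasDerivAt_pdy_comp_curve hU (hF3.pdy hU) hγU hγ
  rw [(pdx_pdy_eventuallyEq_pdy_pdx hU hF2 hγU).pdy_eq] at hFyy
  exact (((hFxx.mul (hFy.pow 2)).sub (((hFxy.const_mul 2).mul hFx).mul hFy)).add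
    (hFyy.mul (hFx.pow 2))).congr_deriv (by simp only [Pi.mul_apply, Pi.pow_apply]; ring)

end AlongCurves

lemma hasDerivAt_mul_rpow_eq_zero {f r : ℝ → ℝ} {f' r' a t : ℝ} (hf : HasDerivAt f f' t)
    (hr : HasDerivAt r r' t) (hr0 : r t ≠ 0) (h : r t * f' + a * f t * r' = 0) :
    HasDerivAt (fun s => f s * r s ^ a) 0 t := by
  refine (hf.mul (hr.rpow_const (p := a) (Or.inl hr0))).congr_deriv ?_
  rw [Real.rpow_sub_one hr0]
  field_simp
  linear_combination r t ^ a * h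

/-- integration step in the proof of Theorem 6 of the paper: if the
third-order relation (equation (15)) holds along an integral curve `γ` of the
tangent field `v = (F_y, −F_x)`, then `H(F)·(x²+y²)^{3−3m}` is constant along `γ`. -/
theorem stmt15 (U : Set (ℝ × ℝ)) (hU : IsOpen U)
    (F : ℝ × ℝ → ℝ) (hF : ContDiffOn ℝ 3 F U) (m : ℝ)
    (I : Set ℝ) (hI : I.OrdConnected) (γ : ℝ → ℝ × ℝ)
    (hγU : ∀ t ∈ I, γ t ∈ U) (hγ0 : ∀ t ∈ I, γ t ≠ (0, 0))
    (hγ' : ∀ t ∈ I, HasDerivAt γ (pdy F (γ t), -pdx F (γ t)) t)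
    (heq : ∀ t ∈ I,
      ((γ t).1 ^ 2 + (γ t).2 ^ 2) *
          (pdx (pdx (pdx F)) (γ t) * (pdy F (γ t)) ^ 3 -
            3 * pdy (pdx (pdx F)) (γ t) * pdx F (γ t) * (pdy F (γ t)) ^ 2 +
            3 * pdy (pdy (pdx F)) (γ t) * (pdx F (γ t)) ^ 2 * pdy F (γ t) -
            pdy (pdy (pdy F)) (γ t) * (pdx F (γ t)) ^ 3) +
        6 * (1 - m) * HH F (γ t) *
          ((γ t).1 * pdy F (γ t) - (γ t).2 * pdx F (γ t)) = 0) :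
    ∀ s ∈ I, ∀ t ∈ I,
      HH F (γ s) * ((γ s).1 ^ 2 + (γ s).2 ^ 2) ^ (3 - 3 * m) =
        HH F (γ t) * ((γ t).1 ^ 2 + (γ t).2 ^ 2) ^ (3 - 3 * m) := by
  have hderiv : ∀ t ∈ I,
      HasDerivAt (fun t => HH F (γ t) * ((γ t).1 ^ 2 + (γ t).2 ^ 2) ^ (3 - 3 * m)) 0 t := by
    intro t ht
    have hr0 : (γ t).1 ^ 2 + (γ t).2 ^ 2 ≠ 0 := fun hr => hγ0 t ht <| by
      obtain ⟨hx, hy⟩ := (add_eq_zero_iff_of_nonneg (sq_nonneg _) (sq_nonneg _)).1 hr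
      exact Prod.ext (pow_eq_zero_iff two_ne_zero |>.1 hx) (pow_eq_zero_iff two_ne_zero |>.1 hy)
    refine hasDerivAt_mul_rpow_eq_zero (hasDerivAt_HH_comp_curve hU hF (hγU t ht) (hγ' t ht))
      (hγ' t ht).fst_sq_add_snd_sq hr0 ?_
    linear_combination heq t ht
  intro s hs t ht
  have h := hI.convex.norm_image_sub_le_of_norm_hasDerivWithin_le
    (fun x hx => (hderiv x hx).hasDerivWithinAt) (fun _ _ => (norm_zero (E := ℝ)).le) ht hs
  rw [zero_mul, norm_le_zero_iff, sub_eq_zero] at h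
  exact h
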